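/- Any periodic solution of the Kepler-Heisenberg system has zero energy: if γ is a T-periodic solution (T > 0) of Hamilton's equations for H, then H(γ) = 0. -/

import Mathlib

/-!
Along a solution the energy `H` is conserved, and the dilation momentum
`J = x px + y py + 2 z pz` satisfies `J' = 2H`: this is Euler's relation for `H`, which is
homogeneous of degree `-2` under the Heisenberg dilations generated by `J`. On a periodic
orbit `J` takes the same value at `0` and `T`, so by Rolle's theorem `J' = 2H` vanishes at some
instant, and hence everywhere.
-/

open Real

/-- The Kepler-Heisenberg Hamiltonian H = K + U on phase space coordinates. -/
noncomputable def Ham (x y z px py pz : ℝ) : ℝ :=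
  (1/2) * ((px - y/2 * pz)^2 + (py + x/2 * pz)^2)
    - 1 / (8 * Real.pi * Real.sqrt ((x^2 + y^2)^2 + 16 * z^2))

/-- A solution of Hamilton's equations q̇ = ∂H/∂p, ṗ = -∂H/∂q for the
Kepler-Heisenberg Hamiltonian, avoiding the singular set (x,y,z) = 0. -/
def IsSolution (x y z px py pz : ℝ → ℝ) : Prop :=
  (∀ t : ℝ, ¬ (x t = 0 ∧ y t = 0 ∧ z t = 0)) ∧
  ∀ t : ℝ,
    HasDerivAt x (deriv (fun s => Ham (x t) (y t) (z t) s (py t) (pz t)) (px t)) t ∧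
    HasDerivAt y (deriv (fun s => Ham (x t) (y t) (z t) (px t) s (pz t)) (py t)) t ∧
    HasDerivAt z (deriv (fun s => Ham (x t) (y t) (z t) (px t) (py t) s) (pz t)) t ∧
    HasDerivAt px (-(deriv (fun s => Ham s (y t) (z t) (px t) (py t) (pz t)) (x t))) t ∧
    HasDerivAt py (-(deriv (fun s => Ham (x t) s (z t) (px t) (py t) (pz t)) (y t))) t ∧
    HasDerivAt pz (-(deriv (fun s => Ham (x t) (y t) s (px t) (py t) (pz t)) (z t))) t

lemma HasDerivAt.one_div_const_mul_sqrt {g : ℝ → ℝ} {g' t : ℝ} {c : ℝ} (hc : c ≠ 0)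
    (hg : HasDerivAt g g' t) (hpos : 0 < g t) :
    HasDerivAt (fun s => 1 / (c * √(g s))) (-(g' / (2 * c * √(g t) ^ 3))) t := by
  have hsqrt : 0 < √(g t) := Real.sqrt_pos.mpr hpos
  refine ((hasDerivAt_const t 1).div ((hg.sqrt hpos.ne').const_mul c)
    (mul_ne_zero hc hsqrt.ne')).congr_deriv ?_
  field_simp
  ring

namespace KeplerHeisenberg

noncomputable def hamDerivX (x y z py pz : ℝ) : ℝ :=
  (py + x / 2 * pz) * (pz / 2)
    + x * (x ^ 2 + y ^ 2) / (4 * π * √((x ^ 2 + y ^ 2) ^ 2 + 16 * z ^ 2) ^ 3)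

noncomputable def hamDerivY (x y z px pz : ℝ) : ℝ :=
  -((px - y / 2 * pz) * (pz / 2))
    + y * (x ^ 2 + y ^ 2) / (4 * π * √((x ^ 2 + y ^ 2) ^ 2 + 16 * z ^ 2) ^ 3)

noncomputable def hamDerivZ (x y z : ℝ) : ℝ :=
  2 * z / (π * √((x ^ 2 + y ^ 2) ^ 2 + 16 * z ^ 2) ^ 3)

noncomputable def hamDerivPx (y px pz : ℝ) : ℝ := px - y / 2 * pz

noncomputable def hamDerivPy (x py pz : ℝ) : ℝ := py + x / 2 * pz

noncomputable def hamDerivPz (x y px py pz : ℝ) : ℝ :=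
  -(y / 2) * hamDerivPx y px pz + x / 2 * hamDerivPy x py pz

noncomputable def dilationMomentum (x y z px py pz : ℝ) : ℝ := x * px + y * py + 2 * z * pz

lemma gauge_pos {x y z : ℝ} (h : ¬(x = 0 ∧ y = 0 ∧ z = 0)) :
    0 < (x ^ 2 + y ^ 2) ^ 2 + 16 * z ^ 2 := by
  by_contra! hle
  apply h
  have hxy : x ^ 2 + y ^ 2 = 0 := by nlinarith [sq_nonneg (x ^ 2 + y ^ 2), sq_nonneg z]
  refine ⟨?_, ?_, ?_⟩ <;> nlinarith [sq_nonneg x, sq_nonneg y, sq_nonneg z]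

section ChainRule

variable {x y z px py pz : ℝ → ℝ} {x' y' z' px' py' pz' t : ℝ}

theorem hasDerivAt_ham_comp (hx : HasDerivAt x x' t) (hy : HasDerivAt y y' t)
    (hz : HasDerivAt z z' t) (hpx : HasDerivAt px px' t) (hpy : HasDerivAt py py' t)
    (hpz : HasDerivAt pz pz' t) (hpos : 0 < (x t ^ 2 + y t ^ 2) ^ 2 + 16 * z t ^ 2) :
    HasDerivAt (fun s => Ham (x s) (y s) (z s) (px s) (py s) (pz s))
      (hamDerivX (x t) (y t) (z t) (py t) (pz t) * x'
        + hamDerivY (x t) (y t) (z t) (px t) (pz t) * y'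
        + hamDerivZ (x t) (y t) (z t) * z'
        + hamDerivPx (y t) (px t) (pz t) * px'
        + hamDerivPy (x t) (py t) (pz t) * py'
        + hamDerivPz (x t) (y t) (px t) (py t) (pz t) * pz') t := by
  have hkin := (((hpx.sub ((hy.div_const 2).mul hpz)).pow 2).add
    ((hpy.add ((hx.div_const 2).mul hpz)).pow 2)).const_mul (1 / 2)
  have hpot := ((((hx.pow 2).add (hy.pow 2)).pow 2).add ((hz.pow 2).const_mul 16))
    |>.one_div_const_mul_sqrt (c := 8 * π) (by positivity) hpos
  refine (hkin.sub hpot).congr_deriv ?_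
  simp only [hamDerivX, hamDerivY, hamDerivZ, hamDerivPx, hamDerivPy, hamDerivPz,
    Pi.add_apply, Pi.sub_apply, Pi.mul_apply, Pi.pow_apply]
  field_simp
  ring

end ChainRule

section Slices

variable {x y z px py pz : ℝ}

theorem deriv_ham_x (hpos : 0 < (x ^ 2 + y ^ 2) ^ 2 + 16 * z ^ 2) :
    deriv (fun s => Ham s y z px py pz) x = hamDerivX x y z py pz := by
  simpa using (hasDerivAt_ham_comp (hasDerivAt_id' x) (hasDerivAt_const x y)
    (hasDerivAt_const x z) (hasDerivAt_const x px) (hasDerivAt_const x py)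
    (hasDerivAt_const x pz) hpos).deriv

theorem deriv_ham_y (hpos : 0 < (x ^ 2 + y ^ 2) ^ 2 + 16 * z ^ 2) :
    deriv (fun s => Ham x s z px py pz) y = hamDerivY x y z px pz := by
  simpa using (hasDerivAt_ham_comp (hasDerivAt_const y x) (hasDerivAt_id' y)
    (hasDerivAt_const y z) (hasDerivAt_const y px) (hasDerivAt_const y py)
    (hasDerivAt_const y pz) hpos).deriv

theorem deriv_ham_z (hpos : 0 < (x ^ 2 + y ^ 2) ^ 2 + 16 * z ^ 2) :
    deriv (fun s => Ham x y s px py pz) z = hamDerivZ x y z := by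
  simpa using (hasDerivAt_ham_comp (hasDerivAt_const z x) (hasDerivAt_const z y)
    (hasDerivAt_id' z) (hasDerivAt_const z px) (hasDerivAt_const z py)
    (hasDerivAt_const z pz) hpos).deriv

theorem deriv_ham_px (hpos : 0 < (x ^ 2 + y ^ 2) ^ 2 + 16 * z ^ 2) :
    deriv (fun s => Ham x y z s py pz) px = hamDerivPx y px pz := by
  simpa using (hasDerivAt_ham_comp (hasDerivAt_const px x) (hasDerivAt_const px y)
    (hasDerivAt_const px z) (hasDerivAt_id' px) (hasDerivAt_const px py) (hasDerivAt_const px pz)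
    hpos).deriv

theorem deriv_ham_py (hpos : 0 < (x ^ 2 + y ^ 2) ^ 2 + 16 * z ^ 2) :
    deriv (fun s => Ham x y z px s pz) py = hamDerivPy x py pz := by
  simpa using (hasDerivAt_ham_comp (hasDerivAt_const py x) (hasDerivAt_const py y)
    (hasDerivAt_const py z) (hasDerivAt_const py px) (hasDerivAt_id' py) (hasDerivAt_const py pz)
    hpos).deriv

theorem deriv_ham_pz (hpos : 0 < (x ^ 2 + y ^ 2) ^ 2 + 16 * z ^ 2) :
    deriv (fun s => Ham x y z px py s) pz = hamDerivPz x y px py pz := by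
  simpa using (hasDerivAt_ham_comp (hasDerivAt_const pz x) (hasDerivAt_const pz y)
    (hasDerivAt_const pz z) (hasDerivAt_const pz px) (hasDerivAt_const pz py) (hasDerivAt_id' pz)
    hpos).deriv

end Slices

/-- `H` is homogeneous of degree `-2` under the dilations
`(x, y, z, px, py, pz) ↦ (λx, λy, λ²z, px/λ, py/λ, pz/λ²)`, whose generator is
`dilationMomentum`; this is the corresponding Euler relation. -/
theorem ham_dilation_euler {x y z px py pz : ℝ} (hpos : 0 < (x ^ 2 + y ^ 2) ^ 2 + 16 * z ^ 2) :
    px * hamDerivPx y px pz + py * hamDerivPy x py pz + 2 * pz * hamDerivPz x y px py pz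
      - (x * hamDerivX x y z py pz + y * hamDerivY x y z px pz + 2 * z * hamDerivZ x y z)
      = 2 * Ham x y z px py pz := by
  have hsq := Real.sq_sqrt hpos.le
  simp only [hamDerivX, hamDerivY, hamDerivZ, hamDerivPx, hamDerivPy, hamDerivPz, Ham]
  field_simp
  linear_combination 32 * hsq

end KeplerHeisenberg

namespace IsSolution

open KeplerHeisenberg

variable {x y z px py pz : ℝ → ℝ}

theorem hamilton_equations (h : IsSolution x y z px py pz) (t : ℝ) :
    HasDerivAt x (hamDerivPx (y t) (px t) (pz t)) t ∧
    HasDerivAt y (hamDerivPy (x t) (py t) (pz t)) t ∧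
    HasDerivAt z (hamDerivPz (x t) (y t) (px t) (py t) (pz t)) t ∧
    HasDerivAt px (-hamDerivX (x t) (y t) (z t) (py t) (pz t)) t ∧
    HasDerivAt py (-hamDerivY (x t) (y t) (z t) (px t) (pz t)) t ∧
    HasDerivAt pz (-hamDerivZ (x t) (y t) (z t)) t := by
  have hpos := gauge_pos (h.1 t)
  rw [← deriv_ham_x hpos, ← deriv_ham_y hpos, ← deriv_ham_z hpos, ← deriv_ham_px hpos,
    ← deriv_ham_py hpos, ← deriv_ham_pz hpos]
  exact h.2 t

theorem hasDerivAt_ham (h : IsSolution x y z px py pz) (t : ℝ) :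
    HasDerivAt (fun s => Ham (x s) (y s) (z s) (px s) (py s) (pz s)) 0 t := by
  obtain ⟨hx, hy, hz, hpx, hpy, hpz⟩ := h.hamilton_equations t
  refine (hasDerivAt_ham_comp hx hy hz hpx hpy hpz (gauge_pos (h.1 t))).congr_deriv ?_
  ring

theorem ham_eq (h : IsSolution x y z px py pz) (t s : ℝ) :
    Ham (x t) (y t) (z t) (px t) (py t) (pz t) = Ham (x s) (y s) (z s) (px s) (py s) (pz s) :=
  is_const_of_deriv_eq_zero (fun u => (h.hasDerivAt_ham u).differentiableAt)
    (fun u => (h.hasDerivAt_ham u).deriv) t s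

theorem hasDerivAt_dilationMomentum (h : IsSolution x y z px py pz) (t : ℝ) :
    HasDerivAt (fun s => dilationMomentum (x s) (y s) (z s) (px s) (py s) (pz s))
      (2 * Ham (x t) (y t) (z t) (px t) (py t) (pz t)) t := by
  obtain ⟨hx, hy, hz, hpx, hpy, hpz⟩ := h.hamilton_equations t
  rw [← ham_dilation_euler (gauge_pos (h.1 t))]
  refine ((hx.mul hpx).add (hy.mul hpy) |>.add ((hz.const_mul 2).mul hpz)).congr_deriv ?_
  ring

end IsSolution

/-- Any periodic solution has zero energy. -/
theorem periodic_implies_zero_energy (x y z px py pz : ℝ → ℝ) (T : ℝ) (hT : 0 < T)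
    (h : IsSolution x y z px py pz)
    (hper : ∀ t : ℝ, x (t + T) = x t ∧ y (t + T) = y t ∧ z (t + T) = z t ∧
      px (t + T) = px t ∧ py (t + T) = py t ∧ pz (t + T) = pz t) :
    ∀ t : ℝ, Ham (x t) (y t) (z t) (px t) (py t) (pz t) = 0 := by
  set J := fun s => KeplerHeisenberg.dilationMomentum (x s) (y s) (z s) (px s) (py s) (pz s)
  have hJ := h.hasDerivAt_dilationMomentum
  have hJT : J 0 = J T := by
    obtain ⟨hx, hy, hz, hpx, hpy, hpz⟩ := hper 0
    simp only [zero_add] at hx hy hz hpx hpy hpz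
    simp only [J, hx, hy, hz, hpx, hpy, hpz]
  obtain ⟨c, -, hc⟩ := exists_hasDerivAt_eq_zero hT
    (fun s _ => (hJ s).continuousAt.continuousWithinAt) hJT (fun s _ => hJ s)
  intro t
  rw [h.ham_eq t c]
  linarith
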